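/- Let K be a finite abstract simplicial complex, 𝒱 a multivector field on K, S an isolated invariant set under 𝒱, and N an isolating set for S. If (P₁, E₁) and (P₂, E₂) are both index pairs for S in N under 𝒱, then (P₁ ∩ P₂, E₁ ∩ E₂) is an index pair for S in N under 𝒱 (in particular, inv_𝒱((P₁ ∩ P₂) \ (E₁ ∩ E₂)) = S). -/
import Mathlib


open scoped Classical

namespace CDS

variable {α : Type*} [DecidableEq α]

/-- A finite abstract simplicial complex: a finite collection of nonempty finite
sets (simplices) closed under taking nonempty subsets. -/
def IsComplex (K : Finset (Finset α)) : Prop :=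
  (∀ σ ∈ K, σ.Nonempty) ∧ ∀ σ ∈ K, ∀ τ : Finset α, τ ⊆ σ → τ.Nonempty → τ ∈ K

/-- The closure of `A` in `K`. -/
def cl (K : Finset (Finset α)) (A : Set (Finset α)) : Set (Finset α) :=
  {σ | σ ∈ K ∧ ∃ τ ∈ A, σ ⊆ τ}

/-- `A` is closed in `K`. -/
def IsClosedIn (K : Finset (Finset α)) (A : Set (Finset α)) : Prop :=
  A = cl K A

/-- The mouth of `A` in `K`. -/
def mo (K : Finset (Finset α)) (A : Set (Finset α)) : Set (Finset α) :=
  cl K A \ A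

/-- `A` is convex with respect to the face poset of `K`. -/
def IsConvex (K : Finset (Finset α)) (A : Set (Finset α)) : Prop :=
  ∀ σ ∈ A, ∀ τ ∈ A, ∀ ρ : Finset α, ρ ∈ K → σ ⊆ ρ → ρ ⊆ τ → ρ ∈ A

/-- A multivector field on `K`: a partition of `K` into convex subsets
(multivectors). -/
structure MVF (K : Finset (Finset α)) where
  vecs : Set (Set (Finset α))
  sub : ∀ V ∈ vecs, V ⊆ (K : Set (Finset α))
  convex : ∀ V ∈ vecs, IsConvex K V
  nonempty : ∀ V ∈ vecs, V.Nonempty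
  cover : ∀ σ ∈ K, ∃ V ∈ vecs, σ ∈ V
  disjoint : ∀ V ∈ vecs, ∀ W ∈ vecs, (V ∩ W).Nonempty → V = W

variable {K : Finset (Finset α)}

/-- `[σ]_𝒱`, the multivector of `𝒱` containing `σ`. -/
def mv (𝒱 : MVF K) (σ : Finset α) : Set (Finset α) :=
  ⋃₀ {V | V ∈ 𝒱.vecs ∧ σ ∈ V}

/-- The induced multivalued map `F_𝒱` on simplices. -/
def Fv (𝒱 : MVF K) (σ : Finset α) : Set (Finset α) :=
  cl K {σ} ∪ mv 𝒱 σ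

/-- `F_𝒱` applied to a set. -/
def Fs (𝒱 : MVF K) (A : Set (Finset α)) : Set (Finset α) :=
  ⋃ σ ∈ A, Fv 𝒱 σ

/-- `ρ` is a path of length `n` in `N`. -/
def IsPathIn (𝒱 : MVF K) (N : Set (Finset α)) (n : ℕ) (ρ : ℕ → Finset α) : Prop :=
  (∀ i < n, ρ (i + 1) ∈ Fv 𝒱 (ρ i)) ∧ ∀ i ≤ n, ρ i ∈ N

/-- `ρ` is a (full) solution. -/
def IsSolution (𝒱 : MVF K) (ρ : ℤ → Finset α) : Prop :=
  ∀ i : ℤ, ρ (i + 1) ∈ Fv 𝒱 (ρ i)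

/-- The mod 2 simplicial boundary operator (summing over faces in `K`). -/
def bdry (K : Finset (Finset α)) (c : Finset α → ZMod 2) (τ : Finset α) : ZMod 2 :=
  ∑ σ ∈ K, if τ ⊆ σ ∧ σ.card = τ.card + 1 then c σ else 0

/-- Relative `n`-chains of the pair `(P, E)`: mod 2 chains supported on
`(n+1)`-element simplices of `P \ E`. -/
def chains (P E : Set (Finset α)) (n : ℕ) : Set (Finset α → ZMod 2) :=
  {c | ∀ σ, c σ ≠ 0 → σ ∈ P \ E ∧ σ.card = n + 1}

/-- The relative boundary operator of the pair `(P, E)`. -/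
noncomputable def relBdry (K : Finset (Finset α)) (P E : Set (Finset α))
    (c : Finset α → ZMod 2) : Finset α → ZMod 2 :=
  (P \ E).indicator (bdry K c)

/-- The relative simplicial homology (with ℤ/2 coefficients) of the pair
`(P, E)` is nonzero: in some dimension there is a relative cycle that is not a
relative boundary. -/
def HasNonzeroHomology (K : Finset (Finset α)) (P E : Set (Finset α)) : Prop :=
  ∃ (n : ℕ) (c : Finset α → ZMod 2), c ∈ chains P E n ∧ relBdry K P E c = 0 ∧
    ∀ d ∈ chains P E (n + 1), relBdry K P E d ≠ c

/-- A multivector `V` is critical if `H(cl V, mo V) ≠ 0`. -/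
def IsCritical (K : Finset (Finset α)) (V : Set (Finset α)) : Prop :=
  HasNonzeroHomology K (cl K V) (mo K V)

/-- Essential solutions. -/
def IsEssential (𝒱 : MVF K) (ρ : ℤ → Finset α) : Prop :=
  IsSolution 𝒱 ρ ∧ ∀ i : ℤ, ¬ IsCritical K (mv 𝒱 (ρ i)) →
    (∃ j, j < i ∧ mv 𝒱 (ρ j) ≠ mv 𝒱 (ρ i)) ∧
    (∃ j, i < j ∧ mv 𝒱 (ρ j) ≠ mv 𝒱 (ρ i))

/-- The invariant part of `A`: all simplices through which an essential
solution with values in `A` passes. -/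
def invPart (𝒱 : MVF K) (A : Set (Finset α)) : Set (Finset α) :=
  {σ | ∃ ρ : ℤ → Finset α, IsEssential 𝒱 ρ ∧ (∀ i, ρ i ∈ A) ∧ ∃ i, ρ i = σ}

/-- `S` is an invariant set. -/
def IsInvariantSet (𝒱 : MVF K) (S : Set (Finset α)) : Prop :=
  invPart 𝒱 S = S

/-- The closed set `N` isolates `S`. -/
def Isolates (𝒱 : MVF K) (N S : Set (Finset α)) : Prop :=
  IsClosedIn K N ∧ Fs 𝒱 S ⊆ N ∧
    ∀ (n : ℕ) (ρ : ℕ → Finset α), IsPathIn 𝒱 N n ρ → ρ 0 ∈ S → ρ n ∈ S →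
      ∀ i ≤ n, ρ i ∈ S

/-- `S` is an isolated invariant set. -/
def IsIsolatedInvariantSet (𝒱 : MVF K) (S : Set (Finset α)) : Prop :=
  IsInvariantSet 𝒱 S ∧ ∃ N, Isolates 𝒱 N S

/-- `A` is `𝒱`-compatible: a union of multivectors of `𝒱`. -/
def IsCompatible (𝒱 : MVF K) (A : Set (Finset α)) : Prop :=
  ∃ R ⊆ 𝒱.vecs, A = ⋃₀ R

/-- `(P, E)` is an index pair for `S` under `𝒱`. -/
def IsIndexPair (𝒱 : MVF K) (S P E : Set (Finset α)) : Prop :=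
  IsClosedIn K P ∧ IsClosedIn K E ∧ E ⊆ P ∧
    Fs 𝒱 (P \ E) ⊆ P ∧ Fs 𝒱 E ∩ P ⊆ E ∧ invPart 𝒱 (P \ E) = S

/-- `(P, E)` is an index pair for `S` in `N` under `𝒱`. -/
def IsIndexPairIn (𝒱 : MVF K) (N S P E : Set (Finset α)) : Prop :=
  IsClosedIn K P ∧ IsClosedIn K E ∧ E ⊆ P ∧
    Fs 𝒱 (P \ E) ⊆ N ∧ Fs 𝒱 E ∩ N ⊆ E ∧ Fs 𝒱 P ∩ N ⊆ P ∧
    invPart 𝒱 (P \ E) = S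

/-- The push forward `pf_𝒱(A, N)` of `A` in `N`. -/
def pf (𝒱 : MVF K) (A N : Set (Finset α)) : Set (Finset α) :=
  {σ | σ ∈ N ∧ ∃ (n : ℕ) (ρ : ℕ → Finset α), IsPathIn 𝒱 N n ρ ∧ ρ 0 ∈ A ∧ ρ n = σ}

/-- `𝒲` is an atomic refinement of `𝒱` (equivalently, `𝒱` is an atomic
coarsening of `𝒲`). -/
def AtomicRefinement (𝒲 𝒱 : MVF K) : Prop :=
  (∀ W ∈ 𝒲.vecs, ∃ V ∈ 𝒱.vecs, W ⊆ V) ∧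
    (𝒱.vecs \ 𝒲.vecs).ncard = 1 ∧ (𝒲.vecs \ 𝒱.vecs).ncard = 2

/-- `𝒱` and `𝒲` are atomic rearrangements of each other. -/
def AtomicRearrangement (𝒱 𝒲 : MVF K) : Prop :=
  AtomicRefinement 𝒲 𝒱 ∨ AtomicRefinement 𝒱 𝒲

/-- `⟨B⟩_𝒱`: the intersection of all convex and `𝒱`-compatible subsets of `K`
containing `B`. -/
def hull (𝒱 : MVF K) (B : Set (Finset α)) : Set (Finset α) :=
  ⋂₀ {A | A ⊆ (K : Set (Finset α)) ∧ IsConvex K A ∧ IsCompatible 𝒱 A ∧ B ⊆ A}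

lemma mem_Fv_self (𝒱 : MVF K) {σ : Finset α} (hσ : σ ∈ K) : σ ∈ Fv 𝒱 σ :=
  Or.inl ⟨hσ, σ, Set.mem_singleton σ, subset_refl σ⟩

lemma closedIn_subset {A : Set (Finset α)} (h : IsClosedIn K A) :
    A ⊆ (K : Set (Finset α)) := by
  intro σ hσ; rw [h] at hσ; exact hσ.1

lemma invPart_subset (𝒱 : MVF K) (A : Set (Finset α)) : invPart 𝒱 A ⊆ A := by
  rintro σ ⟨ρ, _, hA, i, rfl⟩; exact hA i

lemma invPart_mono (𝒱 : MVF K) {A B : Set (Finset α)} (h : A ⊆ B) :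
    invPart 𝒱 A ⊆ invPart 𝒱 B := by
  rintro σ ⟨ρ, he, hA, hi⟩; exact ⟨ρ, he, fun i => h (hA i), hi⟩

lemma closedIn_inter {A B : Set (Finset α)} (hA : IsClosedIn K A)
    (hB : IsClosedIn K B) : IsClosedIn K (A ∩ B) := by
  apply Set.Subset.antisymm
  · intro σ hσ
    exact ⟨closedIn_subset hA hσ.1, σ, hσ, subset_refl σ⟩
  · rintro σ ⟨hσK, τ, ⟨hτA, hτB⟩, hsub⟩
    constructor
    · rw [hA]; exact ⟨hσK, τ, hτA, hsub⟩
    · rw [hB]; exact ⟨hσK, τ, hτB, hsub⟩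

lemma forward_inv (𝒱 : MVF K) {E N : Set (Finset α)} (hE : Fs 𝒱 E ∩ N ⊆ E)
    {ρ : ℤ → Finset α} (hρ : IsSolution 𝒱 ρ) (hNmem : ∀ i, ρ i ∈ N)
    {i : ℤ} (hi : ρ i ∈ E) : ∀ j, i ≤ j → ρ j ∈ E := by
  intro j hj
  exact Int.le_induction hi
    (fun j _ ih => hE ⟨Set.mem_biUnion ih (hρ j), hNmem (j + 1)⟩) j hj

/-- The intersection of two index pairs for `S` in `N` is an index pair for
`S` in `N`; in particular `inv_𝒱((P₁ ∩ P₂) \ (E₁ ∩ E₂)) = S`. -/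
theorem inter_indexPairIn_same_invariant_set (hK : IsComplex K) (𝒱 : MVF K)
    (S N P₁ E₁ P₂ E₂ : Set (Finset α)) (hS : IsIsolatedInvariantSet 𝒱 S)
    (hN : Isolates 𝒱 N S)
    (h₁ : IsIndexPairIn 𝒱 N S P₁ E₁) (h₂ : IsIndexPairIn 𝒱 N S P₂ E₂) :
    IsIndexPairIn 𝒱 N S (P₁ ∩ P₂) (E₁ ∩ E₂) := by
  obtain ⟨hP₁c, hE₁c, hE₁P₁, hF₁, hFE₁, hFP₁, hinv₁⟩ := h₁
  obtain ⟨hP₂c, hE₂c, hE₂P₂, hF₂, hFE₂, hFP₂, hinv₂⟩ := h₂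
  set D : Set (Finset α) := (P₁ ∩ P₂) \ (E₁ ∩ E₂) with hD
  have hDsub : D ⊆ (P₁ \ E₁) ∪ (P₂ \ E₂) := by
    rintro σ ⟨⟨h1, h2⟩, h3⟩
    by_cases hE : σ ∈ E₁
    · exact Or.inr ⟨h2, fun hE2 => h3 ⟨hE, hE2⟩⟩
    · exact Or.inl ⟨h1, hE⟩
  have hPE₁N : P₁ \ E₁ ⊆ N := fun σ hσ =>
    hF₁ (Set.mem_biUnion hσ (mem_Fv_self 𝒱 (closedIn_subset hP₁c hσ.1)))
  have hPE₂N : P₂ \ E₂ ⊆ N := fun σ hσ =>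
    hF₂ (Set.mem_biUnion hσ (mem_Fv_self 𝒱 (closedIn_subset hP₂c hσ.1)))
  have hDN : D ⊆ N := fun σ hσ => (hDsub hσ).elim (fun h => hPE₁N h) fun h => hPE₂N h
  have hSP₁ : S ⊆ P₁ \ E₁ := by rw [← hinv₁]; exact invPart_subset 𝒱 _
  have hSP₂ : S ⊆ P₂ \ E₂ := by rw [← hinv₂]; exact invPart_subset 𝒱 _
  refine ⟨closedIn_inter hP₁c hP₂c, closedIn_inter hE₁c hE₂c,
    Set.inter_subset_inter hE₁P₁ hE₂P₂, ?_, ?_, ?_, ?_⟩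
  · -- Fs 𝒱 D ⊆ N
    rintro τ hτ
    rw [Fs, Set.mem_iUnion₂] at hτ
    obtain ⟨σ, hσ, hτ⟩ := hτ
    rcases hDsub hσ with h | h
    · exact hF₁ (Set.mem_biUnion h hτ)
    · exact hF₂ (Set.mem_biUnion h hτ)
  · -- Fs 𝒱 (E₁ ∩ E₂) ∩ N ⊆ E₁ ∩ E₂
    rintro τ ⟨hτF, hτN⟩
    rw [Fs, Set.mem_iUnion₂] at hτF
    obtain ⟨σ, hσ, hτ⟩ := hτF
    exact ⟨hFE₁ ⟨Set.mem_biUnion hσ.1 hτ, hτN⟩, hFE₂ ⟨Set.mem_biUnion hσ.2 hτ, hτN⟩⟩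
  · -- Fs 𝒱 (P₁ ∩ P₂) ∩ N ⊆ P₁ ∩ P₂
    rintro τ ⟨hτF, hτN⟩
    rw [Fs, Set.mem_iUnion₂] at hτF
    obtain ⟨σ, hσ, hτ⟩ := hτF
    exact ⟨hFP₁ ⟨Set.mem_biUnion hσ.1 hτ, hτN⟩, hFP₂ ⟨Set.mem_biUnion hσ.2 hτ, hτN⟩⟩
  · -- invPart 𝒱 D = S
    apply Set.Subset.antisymm
    · rintro σ ⟨ρ, hess, hDρ, i₀, rfl⟩
      have hρN : ∀ i, ρ i ∈ N := fun i => hDN (hDρ i)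
      by_cases hcase : ∃ i, ρ i ∈ E₁
      · -- then ρ never visits E₂
        have hnotE₂ : ∀ t, ρ t ∉ E₂ := by
          intro t ht
          obtain ⟨i, hi⟩ := hcase
          have h1 : ρ (max i t) ∈ E₁ :=
            forward_inv 𝒱 hFE₁ hess.1 hρN hi _ (le_max_left i t)
          have h2 : ρ (max i t) ∈ E₂ :=
            forward_inv 𝒱 hFE₂ hess.1 hρN ht _ (le_max_right i t)
          exact (hDρ (max i t)).2 ⟨h1, h2⟩
        rw [← hinv₂]
        exact ⟨ρ, hess, fun t => ⟨(hDρ t).1.2, hnotE₂ t⟩, i₀, rfl⟩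
      · push_neg at hcase
        rw [← hinv₁]
        exact ⟨ρ, hess, fun t => ⟨(hDρ t).1.1, hcase t⟩, i₀, rfl⟩
    · -- S ⊆ invPart 𝒱 D
      have hSD : S ⊆ D := fun σ hσ =>
        ⟨⟨(hSP₁ hσ).1, (hSP₂ hσ).1⟩, fun h => (hSP₁ hσ).2 h.1⟩
      intro σ hσ
      rw [← hS.1] at hσ
      exact invPart_mono 𝒱 hSD hσ

end CDS
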